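/- Lemma 4 (Influence of a learning agent). Let θ_TX = θ₀ and run the partial-information algorithm with self-awareness, under Assumptions 1, 2 and 4. If for a certain agent h the belief satisfies μ_{h,i}(θ_TX) → 1 in probability as i → ∞, then μ_{k,i}(θ_TX) → 1 in probability for every agent k ≠ h. -/

import Mathlib

/-!
Write `ψ` for the intermediate (private Bayesian) beliefs and `ψ̂` for what is transmitted.
Since `1 / ψ_{ℓ,i+1}(θ₀) = ∑_θ (μ_{ℓ,i}(θ) / μ_{ℓ,i}(θ₀)) (L_ℓ(θ) / L_ℓ(θ₀))` and the
likelihood ratios of a fresh signal have mean one and are independent of the past,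
`E[1 / ψ_{ℓ,i+1}(θ₀)] = E[1 / μ_{ℓ,i}(θ₀)]`; by weighted AM-GM the geometric pooling gives
`1 / μ_{k,i+1}(θ₀) ≤ ∑_ℓ a_{ℓk} / ψ_{ℓ,i+1}(θ₀)`. Hence `E[1 / μ_{k,i}(θ₀)]` stays bounded,
so all beliefs in `θ₀` are bounded away from zero in probability, uniformly in time.

In the pooled ratio `μ_{k,i+1}(θ) / μ_{k,i+1}(θ₀) = ∏_ℓ (B_ℓ(θ) / ψ_ℓ(θ₀)) ^ a_{ℓk}`, where
`B_k = ψ_k` and `B_ℓ = ψ̂_ℓ` otherwise, every factor is therefore bounded in probability. If a neighbour `j` of `k` learns, so does its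
intermediate belief, and since `θ_TX = θ₀` its factor is at most
`((1 - ψ_j(θ₀)) / ψ_j(θ₀)) ^ a_{jk} → 0`. Learning thus passes along every edge of the
network, and by primitivity of `A` from `h` to every agent.
-/

open MeasureTheory ProbabilityTheory Filter Topology
open scoped ENNReal

section Beliefs

variable {ι Θ : Type*} [Fintype Θ]

structure IsPosProbVec (p : Θ → ℝ) : Prop where
  pos : ∀ θ, 0 < p θ
  sum_eq_one : ∑ θ, p θ = 1

namespace IsPosProbVec

variable {p : Θ → ℝ}

lemma le_one (hp : IsPosProbVec p) (θ : Θ) : p θ ≤ 1 :=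
  hp.sum_eq_one ▸ Finset.single_le_sum (fun θ _ => (hp.pos θ).le) (Finset.mem_univ θ)

lemma inv_eq_sum_div (hp : IsPosProbVec p) (θ₀ : Θ) : (p θ₀)⁻¹ = ∑ θ, p θ / p θ₀ := by
  rw [← Finset.sum_div, hp.sum_eq_one, one_div]

lemma one_sub_eq_sum_erase [DecidableEq Θ] (hp : IsPosProbVec p) (θ₀ : Θ) :
    1 - p θ₀ = ∑ θ ∈ Finset.univ.erase θ₀, p θ := by
  rw [← hp.sum_eq_one, ← Finset.add_sum_erase _ _ (Finset.mem_univ θ₀), add_sub_cancel_left]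

lemma lt_one [Nontrivial Θ] (hp : IsPosProbVec p) (θ₀ : Θ) : p θ₀ < 1 := by
  classical
  obtain ⟨θ, hθ⟩ := exists_ne θ₀
  have := Finset.sum_pos (fun θ _ => hp.pos θ) ⟨θ, Finset.mem_erase.2 ⟨hθ, Finset.mem_univ θ⟩⟩
  linarith [hp.one_sub_eq_sum_erase θ₀]

lemma one_sub_le_one_sub_div (hp : IsPosProbVec p) (θ₀ : Θ) :
    1 - p θ₀ ≤ (1 - p θ₀) / p θ₀ :=
  le_div_self (sub_nonneg.2 (hp.le_one θ₀)) (hp.pos θ₀) (hp.le_one θ₀)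

end IsPosProbVec

noncomputable def bayesUpdate (μ l : Θ → ℝ) (θ : Θ) : ℝ :=
  μ θ * l θ / ∑ θ', μ θ' * l θ'

/-- The paper's `ψ̂` for the transmitted hypothesis `θ₀`. -/
noncomputable def partialShare [DecidableEq Θ] (θ₀ : Θ) (p : Θ → ℝ) (θ : Θ) : ℝ :=
  if θ = θ₀ then p θ₀ else (1 - p θ₀) / (Fintype.card Θ - 1)

noncomputable def logLinearPool [Fintype ι] (w : ι → ℝ) (B : ι → Θ → ℝ) (θ : Θ) : ℝ :=
  Real.exp (∑ ℓ, w ℓ * Real.log (B ℓ θ)) / ∑ θ', Real.exp (∑ ℓ, w ℓ * Real.log (B ℓ θ'))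

noncomputable def receivedBeliefs [DecidableEq ι] [DecidableEq Θ] (θ₀ : Θ) (ψ : ι → Θ → ℝ)
    (k : ι) : ι → Θ → ℝ :=
  Function.update (fun ℓ => partialShare θ₀ (ψ ℓ)) k (ψ k)

noncomputable def socialLearningStep [Fintype ι] [DecidableEq ι] [DecidableEq Θ]
    (a : ι → ι → ℝ) (θ₀ : Θ) (μ l : ι → Θ → ℝ) (k : ι) : Θ → ℝ :=
  logLinearPool (fun ℓ => a ℓ k) (receivedBeliefs θ₀ (fun ℓ => bayesUpdate (μ ℓ) (l ℓ)) k)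

section Bayes

variable {μ l : Θ → ℝ}

lemma IsPosProbVec.bayesUpdate (hμ : IsPosProbVec μ) (hl : ∀ θ, 0 < l θ) :
    IsPosProbVec (bayesUpdate μ l) := by
  have hS : 0 < ∑ θ, μ θ * l θ :=
    Finset.sum_pos (fun θ _ => mul_pos (hμ.pos θ) (hl θ))
      (Finset.nonempty_of_sum_ne_zero (hμ.sum_eq_one ▸ one_ne_zero))
  refine ⟨fun θ => div_pos (mul_pos (hμ.pos θ) (hl θ)) hS, ?_⟩
  simp only [_root_.bayesUpdate, ← Finset.sum_div, div_self hS.ne']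

lemma inv_bayesUpdate (θ₀ : Θ) :
    (bayesUpdate μ l θ₀)⁻¹ = ∑ θ, μ θ / μ θ₀ * (l θ / l θ₀) := by
  simp only [bayesUpdate, inv_div, Finset.sum_div, div_mul_div_comm]

lemma bayesUpdate_le (hμ : ∀ θ, 0 < μ θ) (hl : ∀ θ, 0 < l θ) (θ₀ θ : Θ) :
    bayesUpdate μ l θ ≤ μ θ / μ θ₀ * (l θ / l θ₀) := by
  rw [bayesUpdate, div_mul_div_comm]
  exact div_le_div_of_nonneg_left (mul_pos (hμ θ) (hl θ)).le (mul_pos (hμ θ₀) (hl θ₀))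
    (Finset.single_le_sum (f := fun θ => μ θ * l θ)
      (fun θ _ => (mul_pos (hμ θ) (hl θ)).le) (Finset.mem_univ θ₀))

lemma one_sub_bayesUpdate_le [DecidableEq Θ] (hμ : IsPosProbVec μ) (hl : ∀ θ, 0 < l θ)
    {θ₀ : Θ} {T : ℝ} (hT : ∀ θ, l θ / l θ₀ ≤ T) :
    1 - bayesUpdate μ l θ₀ ≤ T * ((1 - μ θ₀) / μ θ₀) := by
  rw [(hμ.bayesUpdate hl).one_sub_eq_sum_erase, hμ.one_sub_eq_sum_erase, Finset.sum_div,
    Finset.mul_sum]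
  refine Finset.sum_le_sum fun θ _ => (bayesUpdate_le hμ.pos hl θ₀ θ).trans ?_
  rw [mul_comm]
  exact mul_le_mul_of_nonneg_right (hT θ) (div_pos (hμ.pos θ) (hμ.pos θ₀)).le

end Bayes

lemma one_le_card_sub_one [Nontrivial Θ] : (1 : ℝ) ≤ Fintype.card Θ - 1 := by
  have : (2 : ℝ) ≤ Fintype.card Θ := by exact_mod_cast Fintype.one_lt_card
  linarith

section PartialShare

variable [DecidableEq Θ] {p : Θ → ℝ} {θ₀ : Θ}

@[simp]
lemma partialShare_self : partialShare θ₀ p θ₀ = p θ₀ := if_pos rfl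

lemma partialShare_of_ne {θ : Θ} (hθ : θ ≠ θ₀) :
    partialShare θ₀ p θ = (1 - p θ₀) / (Fintype.card Θ - 1) := if_neg hθ

lemma partialShare_le [Nontrivial Θ] (hp : p θ₀ ≤ 1) {θ : Θ} (hθ : θ ≠ θ₀) :
    partialShare θ₀ p θ ≤ 1 - p θ₀ := by
  rw [partialShare_of_ne hθ]
  exact div_le_self (sub_nonneg.2 hp) one_le_card_sub_one

lemma IsPosProbVec.partialShare [Nontrivial Θ] (hp : IsPosProbVec p) (θ₀ : Θ) :
    IsPosProbVec (partialShare θ₀ p) := by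
  have hc : (0 : ℝ) < Fintype.card Θ - 1 := one_le_card_sub_one.trans_lt' one_pos
  refine ⟨fun θ => ?_, ?_⟩
  · by_cases hθ : θ = θ₀
    · simpa [_root_.partialShare, hθ] using hp.pos θ₀
    · simpa [partialShare_of_ne hθ, hc] using hp.lt_one θ₀
  · rw [← Finset.add_sum_erase _ _ (Finset.mem_univ θ₀), partialShare_self,
      Finset.sum_congr rfl fun θ hθ => partialShare_of_ne (Finset.ne_of_mem_erase hθ),
      Finset.sum_const, Finset.card_erase_of_mem (Finset.mem_univ θ₀), Finset.card_univ,
      nsmul_eq_mul, Nat.cast_pred Fintype.card_pos, mul_div_cancel₀ _ hc.ne']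
    ring

@[fun_prop]
lemma measurable_partialShare (θ₀ : Θ) : Measurable (partialShare θ₀ : (Θ → ℝ) → Θ → ℝ) :=
  measurable_pi_lambda _ fun θ => by
    by_cases hθ : θ = θ₀ <;> simp only [partialShare, hθ, if_true, if_false] <;> fun_prop

end PartialShare

section Pool

variable [Fintype ι] {w : ι → ℝ} {B : ι → Θ → ℝ}

lemma IsPosProbVec.logLinearPool [Nonempty Θ] (w : ι → ℝ) (B : ι → Θ → ℝ) :
    IsPosProbVec (logLinearPool w B) := by
  have hZ : 0 < ∑ θ, Real.exp (∑ ℓ, w ℓ * Real.log (B ℓ θ)) :=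
    Finset.sum_pos (fun θ _ => Real.exp_pos _) Finset.univ_nonempty
  refine ⟨fun θ => div_pos (Real.exp_pos _) hZ, ?_⟩
  simp only [_root_.logLinearPool, ← Finset.sum_div, div_self hZ.ne']

lemma logLinearPool_div (hB : ∀ ℓ θ, 0 < B ℓ θ) (θ₀ θ : Θ) :
    logLinearPool w B θ / logLinearPool w B θ₀ = ∏ ℓ, (B ℓ θ / B ℓ θ₀) ^ w ℓ := by
  have hZ : 0 < ∑ θ, Real.exp (∑ ℓ, w ℓ * Real.log (B ℓ θ)) :=
    Finset.sum_pos (fun θ _ => Real.exp_pos _) ⟨θ, Finset.mem_univ θ⟩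
  rw [logLinearPool, logLinearPool, div_div_div_cancel_right₀ hZ.ne', ← Real.exp_sub,
    ← Finset.sum_sub_distrib, Real.exp_sum]
  refine Finset.prod_congr rfl fun ℓ _ => ?_
  rw [← mul_sub, ← Real.log_div (hB ℓ θ).ne' (hB ℓ θ₀).ne',
    Real.rpow_def_of_pos (div_pos (hB ℓ θ) (hB ℓ θ₀)), mul_comm]

lemma inv_logLinearPool_le [Nonempty Θ] (hw₀ : ∀ ℓ, 0 ≤ w ℓ) (hw₁ : ∑ ℓ, w ℓ = 1)
    (hB : ∀ ℓ, IsPosProbVec (B ℓ)) (θ₀ : Θ) :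
    (logLinearPool w B θ₀)⁻¹ ≤ ∑ ℓ, w ℓ / B ℓ θ₀ := by
  rw [(IsPosProbVec.logLinearPool w B).inv_eq_sum_div θ₀]
  calc ∑ θ, logLinearPool w B θ / logLinearPool w B θ₀
      = ∑ θ, ∏ ℓ, (B ℓ θ / B ℓ θ₀) ^ w ℓ :=
        Finset.sum_congr rfl fun θ _ => logLinearPool_div (fun ℓ => (hB ℓ).pos) θ₀ θ
    _ ≤ ∑ θ, ∑ ℓ, w ℓ * (B ℓ θ / B ℓ θ₀) :=
        Finset.sum_le_sum fun θ _ => Real.geom_mean_le_arith_mean_weighted _ _ _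
          (fun ℓ _ => hw₀ ℓ) hw₁ fun ℓ _ => (div_pos ((hB ℓ).pos θ) ((hB ℓ).pos θ₀)).le
    _ = ∑ ℓ, w ℓ / B ℓ θ₀ := by
        rw [Finset.sum_comm]
        refine Finset.sum_congr rfl fun ℓ _ => ?_
        rw [← Finset.mul_sum, ← Finset.sum_div, (hB ℓ).sum_eq_one, mul_one_div]

lemma prod_rpow_le_mul_rpow (hw₀ : ∀ ℓ, 0 ≤ w ℓ) (hw₁ : ∑ ℓ, w ℓ = 1) {x : ι → ℝ} {T : ℝ}
    (hT : 1 ≤ T) (hx₀ : ∀ ℓ, 0 ≤ x ℓ) (hxT : ∀ ℓ, x ℓ ≤ T) (j : ι) :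
    ∏ ℓ, x ℓ ^ w ℓ ≤ T * x j ^ w j := by
  classical
  rw [← Finset.mul_prod_erase _ _ (Finset.mem_univ j), mul_comm]
  refine mul_le_mul_of_nonneg_right ?_ (Real.rpow_nonneg (hx₀ j) _)
  calc ∏ ℓ ∈ Finset.univ.erase j, x ℓ ^ w ℓ
      ≤ ∏ ℓ ∈ Finset.univ.erase j, T ^ w ℓ :=
        Finset.prod_le_prod (fun ℓ _ => Real.rpow_nonneg (hx₀ ℓ) _)
          fun ℓ _ => Real.rpow_le_rpow (hx₀ ℓ) (hxT ℓ) (hw₀ ℓ)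
    _ = T ^ ∑ ℓ ∈ Finset.univ.erase j, w ℓ := (Real.rpow_sum_of_pos (by linarith) _ _).symm
    _ ≤ T ^ (1 : ℝ) := Real.rpow_le_rpow_of_exponent_le hT <| hw₁ ▸
        Finset.sum_le_sum_of_subset_of_nonneg (Finset.erase_subset _ _) fun ℓ _ _ => hw₀ ℓ
    _ = T := Real.rpow_one T

lemma one_sub_logLinearPool_le [Nonempty Θ] [DecidableEq Θ] (hw₀ : ∀ ℓ, 0 ≤ w ℓ)
    (hw₁ : ∑ ℓ, w ℓ = 1) (hB : ∀ ℓ θ, 0 < B ℓ θ) {θ₀ : Θ} {T x : ℝ} (hT : 1 ≤ T)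
    (hBT : ∀ ℓ θ, B ℓ θ / B ℓ θ₀ ≤ T) (j : ι) (hBj : ∀ θ, θ ≠ θ₀ → B j θ / B j θ₀ ≤ x) :
    1 - logLinearPool w B θ₀ ≤ (Fintype.card Θ - 1) * (T * x ^ w j) := by
  have hm := IsPosProbVec.logLinearPool w B
  have hρ₀ : ∀ ℓ θ, 0 ≤ B ℓ θ / B ℓ θ₀ := fun ℓ θ => (div_pos (hB ℓ θ) (hB ℓ θ₀)).le
  calc 1 - logLinearPool w B θ₀
      ≤ (1 - logLinearPool w B θ₀) / logLinearPool w B θ₀ := hm.one_sub_le_one_sub_div θ₀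
    _ = ∑ θ ∈ Finset.univ.erase θ₀, ∏ ℓ, (B ℓ θ / B ℓ θ₀) ^ w ℓ := by
        rw [hm.one_sub_eq_sum_erase, Finset.sum_div]
        exact Finset.sum_congr rfl fun θ _ => logLinearPool_div hB θ₀ θ
    _ ≤ ∑ _θ ∈ Finset.univ.erase θ₀, T * x ^ w j := by
        refine Finset.sum_le_sum fun θ hθ => (prod_rpow_le_mul_rpow hw₀ hw₁ hT (hρ₀ · θ)
          (hBT · θ) j).trans (mul_le_mul_of_nonneg_left ?_ (by linarith))
        exact Real.rpow_le_rpow (hρ₀ j θ) (hBj θ (Finset.ne_of_mem_erase hθ)) (hw₀ j)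
    _ = (Fintype.card Θ - 1) * (T * x ^ w j) := by
        rw [Finset.sum_const, Finset.card_erase_of_mem (Finset.mem_univ θ₀), Finset.card_univ,
          nsmul_eq_mul, Nat.cast_pred Fintype.card_pos]

end Pool

section Step

variable [DecidableEq ι] [DecidableEq Θ] {θ₀ : Θ}

@[simp]
lemma receivedBeliefs_apply_self (ψ : ι → Θ → ℝ) (k ℓ : ι) :
    receivedBeliefs θ₀ ψ k ℓ θ₀ = ψ ℓ θ₀ := by
  rcases eq_or_ne ℓ k with rfl | h <;> simp [receivedBeliefs, *]

lemma IsPosProbVec.receivedBeliefs [Nontrivial Θ] {ψ : ι → Θ → ℝ}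
    (hψ : ∀ ℓ, IsPosProbVec (ψ ℓ)) (k ℓ : ι) : IsPosProbVec (receivedBeliefs θ₀ ψ k ℓ) := by
  rcases eq_or_ne ℓ k with rfl | h
  · simpa [_root_.receivedBeliefs] using hψ ℓ
  · simpa [_root_.receivedBeliefs, h] using (hψ ℓ).partialShare θ₀

variable [Fintype ι]

lemma sum_mul_log_receivedBeliefs (w : ι → ℝ) (ψ : ι → Θ → ℝ) (k : ι) (θ : Θ) :
    ∑ ℓ, w ℓ * Real.log (receivedBeliefs θ₀ ψ k ℓ θ) =
      w k * Real.log (ψ k θ) +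
        ∑ ℓ ∈ Finset.univ.erase k, w ℓ * Real.log (partialShare θ₀ (ψ ℓ) θ) := by
  rw [← Finset.add_sum_erase _ _ (Finset.mem_univ k)]
  congr 1
  · simp [receivedBeliefs]
  · exact Finset.sum_congr rfl fun ℓ hℓ => by
      simp [receivedBeliefs, Finset.ne_of_mem_erase hℓ]

lemma measurable_socialLearningStep (a : ι → ι → ℝ) (θ₀ : Θ) :
    Measurable fun p : (ι → Θ → ℝ) × (ι → Θ → ℝ) => socialLearningStep a θ₀ p.1 p.2 := by
  unfold socialLearningStep logLinearPool receivedBeliefs bayesUpdate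
  fun_prop

variable {a : ι → ι → ℝ} {μ l : ι → Θ → ℝ} {k : ι}

lemma inv_socialLearningStep_le [Nontrivial Θ] (ha₀ : ∀ ℓ, 0 ≤ a ℓ k) (ha₁ : ∑ ℓ, a ℓ k = 1)
    (hμ : ∀ ℓ, IsPosProbVec (μ ℓ)) (hl : ∀ ℓ θ, 0 < l ℓ θ) :
    (socialLearningStep a θ₀ μ l k θ₀)⁻¹ ≤ ∑ ℓ, a ℓ k * (bayesUpdate (μ ℓ) (l ℓ) θ₀)⁻¹ := by
  refine (inv_logLinearPool_le ha₀ ha₁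
    (IsPosProbVec.receivedBeliefs (fun ℓ => (hμ ℓ).bayesUpdate (hl ℓ)) k) θ₀).trans_eq ?_
  simp only [receivedBeliefs_apply_self, div_eq_mul_inv]

lemma one_sub_socialLearningStep_le [Nontrivial Θ] (ha₀ : ∀ ℓ, 0 ≤ a ℓ k)
    (ha₁ : ∑ ℓ, a ℓ k = 1) (hμ : ∀ ℓ, IsPosProbVec (μ ℓ)) (hl : ∀ ℓ θ, 0 < l ℓ θ)
    {j : ι} (hjk : j ≠ k) {T δ : ℝ} (hT : ∀ ℓ, (bayesUpdate (μ ℓ) (l ℓ) θ₀)⁻¹ ≤ T)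
    (hδ : 1 - bayesUpdate (μ j) (l j) θ₀ ≤ δ) :
    1 - socialLearningStep a θ₀ μ l k θ₀ ≤ (Fintype.card Θ - 1) * (T * (δ * T) ^ a j k) := by
  have hψ : ∀ ℓ, IsPosProbVec (bayesUpdate (μ ℓ) (l ℓ)) := fun ℓ => (hμ ℓ).bayesUpdate (hl ℓ)
  have hB := IsPosProbVec.receivedBeliefs (θ₀ := θ₀) hψ k
  refine one_sub_logLinearPool_le ha₀ ha₁ (fun ℓ => (hB ℓ).pos)
    ((one_le_inv₀ ((hψ k).pos θ₀)).2 ((hψ k).le_one θ₀) |>.trans (hT k))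
    (fun ℓ θ => ?_) j fun θ hθ => ?_
  · rw [receivedBeliefs_apply_self, div_eq_mul_inv]
    exact (mul_le_of_le_one_left (inv_pos.2 ((hψ ℓ).pos θ₀)).le ((hB ℓ).le_one θ)).trans (hT ℓ)
  · rw [receivedBeliefs_apply_self, div_eq_mul_inv]
    refine mul_le_mul ?_ (hT j) (inv_pos.2 ((hψ j).pos θ₀)).le
      ((sub_nonneg.2 ((hψ j).le_one θ₀)).trans hδ)
    simpa [receivedBeliefs, hjk] using (partialShare_le ((hψ j).le_one θ₀) hθ).trans hδ

end Step

end Beliefs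

lemma Matrix.induction_of_pow_apply_pos {n : Type*} [Fintype n] [DecidableEq n]
    {A : Matrix n n ℝ} (hA : ∀ i j, 0 ≤ A i j) {S : n → Prop}
    (hS : ∀ i j, 0 < A i j → S i → S j) {i j : n} {m : ℕ} (hm : 0 < (A ^ m) i j) (hi : S i) :
    S j := by
  let := Matrix.toQuiver A
  obtain ⟨⟨p, -⟩⟩ := (Matrix.pow_apply_pos_iff_nonempty_path hA m i j).1 hm
  clear hm
  induction p with
  | nil => exact hi
  | cons _ e ih => exact hS _ _ e.down ih

section Probability

variable {Ω : Type*} [MeasurableSpace Ω] {P : Measure Ω}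

lemma measure_le_le_ofReal_div {f : Ω → ℝ} (hf : AEMeasurable f P) {C T : ℝ} (hT : 0 < T)
    (hC : ∫⁻ ω, ENNReal.ofReal (f ω) ∂P ≤ ENNReal.ofReal C) :
    P {ω | T ≤ f ω} ≤ ENNReal.ofReal (C / T) := by
  calc P {ω | T ≤ f ω} ≤ P {ω | ENNReal.ofReal T ≤ ENNReal.ofReal (f ω)} :=
        measure_mono fun ω hω => ENNReal.ofReal_le_ofReal hω
    _ ≤ (∫⁻ ω, ENNReal.ofReal (f ω) ∂P) / ENNReal.ofReal T :=
        meas_ge_le_lintegral_div hf.ennreal_ofReal (ENNReal.ofReal_pos.2 hT).ne'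
          ENNReal.ofReal_ne_top
    _ ≤ ENNReal.ofReal (C / T) := by
        rw [ENNReal.ofReal_div_of_pos hT]
        exact ENNReal.div_le_div_right hC _

lemma exists_forall_measure_exists_le_le {α : Type*} [Fintype α] {f : α → ℕ → Ω → ℝ}
    (hf : ∀ a i, AEMeasurable (f a i) P) {C : ℝ}
    (hC : ∀ a i, ∫⁻ ω, ENNReal.ofReal (f a i ω) ∂P ≤ ENNReal.ofReal C) {η : ℝ≥0∞}
    (hη : 0 < η) : ∃ T, 0 < T ∧ ∀ i, P {ω | ∃ a, T ≤ f a i ω} ≤ η := by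
  have hbound : ∀ T, 0 < T → ∀ i,
      P {ω | ∃ a, T ≤ f a i ω} ≤ ENNReal.ofReal (Fintype.card α * C / T) := by
    intro T hT i
    rw [Set.ofPred_exists, mul_div_assoc, ENNReal.ofReal_mul (Nat.cast_nonneg _),
      ENNReal.ofReal_natCast]
    refine (measure_iUnion_fintype_le P _).trans ?_
    refine (Finset.sum_le_sum fun a _ => measure_le_le_ofReal_div (hf a i) hT (hC a i)).trans ?_
    rw [Finset.sum_const, Finset.card_univ, nsmul_eq_mul]
  have hlim : Tendsto (fun T => ENNReal.ofReal (Fintype.card α * C / T)) atTop (𝓝 0) :=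
    ENNReal.ofReal_zero ▸ (ENNReal.continuous_ofReal.tendsto 0).comp
      (tendsto_const_nhds.div_atTop tendsto_id)
  obtain ⟨T, hTη, hT⟩ := ((hlim.eventually_lt_const hη).and (eventually_gt_atTop 0)).exists
  exact ⟨T, hT, fun i => (hbound T hT i).trans hTη.le⟩

lemma tendsto_measure_zero_of_forall_subset_union {A : ℕ → Set Ω}
    (h : ∀ η : ℝ≥0∞, 0 < η → ∃ B D : ℕ → Set Ω, (∀ i, P (B i) ≤ η) ∧
      Tendsto (fun i => P (D i)) atTop (𝓝 0) ∧ ∀ i, A i ⊆ B i ∪ D i) :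
    Tendsto (fun i => P (A i)) atTop (𝓝 0) := by
  rw [ENNReal.tendsto_atTop_zero]
  intro ε hε
  obtain ⟨B, D, hB, hD, hA⟩ := h (ε / 2) (ENNReal.half_pos hε.ne')
  obtain ⟨N, hN⟩ := ENNReal.tendsto_atTop_zero.1 hD (ε / 2) (ENNReal.half_pos hε.ne')
  refine ⟨N, fun i hi => ?_⟩
  calc P (A i) ≤ P (B i) + P (D i) := (measure_mono (hA i)).trans (measure_union_le _ _)
    _ ≤ ε / 2 + ε / 2 := add_le_add (hB i) (hN i hi)
    _ = ε := ENNReal.add_halves ε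

lemma tendstoInMeasure_one_iff {f : ℕ → Ω → ℝ} (hf : ∀ i ω, f i ω ≤ 1) :
    TendstoInMeasure P f atTop (fun _ => 1) ↔
      ∀ ε, 0 < ε → Tendsto (fun i => P {ω | ε ≤ 1 - f i ω}) atTop (𝓝 0) := by
  have hdist : ∀ i ω, dist (f i ω) 1 = 1 - f i ω := fun i ω => by
    rw [Real.dist_eq, abs_sub_comm, abs_of_nonneg (sub_nonneg.2 (hf i ω))]
  simp only [tendstoInMeasure_iff_dist, hdist]

lemma lintegral_ofReal_density_ratio {X : Type*} [MeasurableSpace X] {ν : Measure X}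
    {p q : X → ℝ} (hp : ∀ x, 0 < p x) (hpm : Measurable p) (hqm : Measurable q)
    (hq₀ : ∀ x, 0 ≤ q x) (hq : ∫ x, q x ∂ν = 1) {Y : Ω → X} (hY : Measurable Y)
    (hYp : P.map Y = ν.withDensity fun x => ENNReal.ofReal (p x)) :
    ∫⁻ ω, ENNReal.ofReal (q (Y ω) / p (Y ω)) ∂P = 1 := by
  have hqi : Integrable q ν := by
    by_contra hq'
    simp [integral_undef hq'] at hq
  have hm : Measurable fun x => ENNReal.ofReal (q x / p x) := by fun_prop
  have hpq : ∀ x, ENNReal.ofReal (p x) * ENNReal.ofReal (q x / p x) = ENNReal.ofReal (q x) :=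
    fun x => by rw [← ENNReal.ofReal_mul (hp x).le, mul_div_cancel₀ _ (hp x).ne']
  rw [← lintegral_map hm hY, hYp, lintegral_withDensity_eq_lintegral_mul _ hpm.ennreal_ofReal hm]
  simp only [Pi.mul_apply, hpq]
  rw [← ofReal_integral_eq_lintegral_ofReal hqi (Eventually.of_forall hq₀), hq, ENNReal.ofReal_one]

end Probability

section Signals

variable {Ω ι Θ : Type*} [MeasurableSpace Ω] {P : Measure Ω}

/-- `lik i ω ℓ θ` is the likelihood, under `θ`, of the signal that agent `ℓ` observes at
time `i`. -/
structure IsSignalLikelihood (P : Measure Ω) (θ₀ : Θ) (lik : ℕ → Ω → ι → Θ → ℝ) : Prop where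
  pos : ∀ i ω ℓ θ, 0 < lik i ω ℓ θ
  measurable : ∀ i, Measurable (lik i)
  indep : iIndepFun (fun i => lik (i + 1)) P
  lintegral_ratio :
    ∀ i ℓ θ, ∫⁻ ω, ENNReal.ofReal (lik (i + 1) ω ℓ θ / lik (i + 1) ω ℓ θ₀) ∂P = 1

lemma IsSignalLikelihood.of_density {X : ι → Type*} [∀ ℓ, MeasurableSpace (X ℓ)]
    {ν : ∀ ℓ, Measure (X ℓ)} {L : ∀ ℓ, Θ → X ℓ → ℝ} {ξ : ∀ ℓ, ℕ → Ω → X ℓ}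
    (hLpos : ∀ ℓ θ x, 0 < L ℓ θ x) (hLmeas : ∀ ℓ θ, Measurable (L ℓ θ))
    (hLdens : ∀ ℓ θ, ∫ x, L ℓ θ x ∂(ν ℓ) = 1) (hξmeas : ∀ ℓ i, Measurable (ξ ℓ i))
    (hξdist : ∀ ℓ i, 1 ≤ i →
      P.map (ξ ℓ i) = (ν ℓ).withDensity fun x => ENNReal.ofReal (L ℓ θ₀ x))
    (hξindep : iIndepFun (fun i ω ℓ => ξ ℓ (i + 1) ω) P) :
    IsSignalLikelihood P θ₀ fun i ω ℓ θ => L ℓ θ (ξ ℓ i ω) where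
  pos _ _ ℓ θ := hLpos ℓ θ _
  measurable i := measurable_pi_lambda _ fun ℓ => measurable_pi_lambda _ fun θ =>
    (hLmeas ℓ θ).comp (hξmeas ℓ i)
  indep := hξindep.comp (fun _ x ℓ θ => L ℓ θ (x ℓ)) fun _ =>
    measurable_pi_lambda _ fun ℓ => measurable_pi_lambda _ fun θ =>
      (hLmeas ℓ θ).comp (measurable_pi_apply ℓ)
  lintegral_ratio i ℓ θ := lintegral_ofReal_density_ratio (hLpos ℓ θ₀) (hLmeas ℓ θ₀)
    (hLmeas ℓ θ) (fun x => (hLpos ℓ θ x).le) (hLdens ℓ θ) (hξmeas ℓ (i + 1))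
    (hξdist ℓ (i + 1) (Nat.le_add_left 1 i))

end Signals

section Dynamics

variable {Ω ι Θ : Type*} [Fintype ι] [Fintype Θ] [DecidableEq ι] [DecidableEq Θ]

noncomputable def socialLearning (a : ι → ι → ℝ) (θ₀ : Θ) (μ₀ : ι → Θ → ℝ)
    (lik : ℕ → Ω → ι → Θ → ℝ) : ℕ → Ω → ι → Θ → ℝ
  | 0 => fun _ => μ₀
  | i + 1 => fun ω => socialLearningStep a θ₀ (socialLearning a θ₀ μ₀ lik i ω) (lik (i + 1) ω)

/-- `intermediateBelief … i` is the paper's `ψ_{i+1}`: the update of `μ_i` by the signals of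
time `i + 1`. -/
noncomputable def intermediateBelief (a : ι → ι → ℝ) (θ₀ : Θ) (μ₀ : ι → Θ → ℝ)
    (lik : ℕ → Ω → ι → Θ → ℝ) (i : ℕ) (ω : Ω) (ℓ : ι) : Θ → ℝ :=
  bayesUpdate (socialLearning a θ₀ μ₀ lik i ω ℓ) (lik (i + 1) ω ℓ)

abbrev pastSignals {β : Type*} [MeasurableSpace β] (X : ℕ → Ω → β) (i : ℕ) :
    MeasurableSpace Ω :=
  ⨆ j < i, MeasurableSpace.comap (X (j + 1)) inferInstance

variable {a : ι → ι → ℝ} {θ₀ : Θ} {μ₀ : ι → Θ → ℝ} {lik : ℕ → Ω → ι → Θ → ℝ}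

lemma isPosProbVec_socialLearning [Nonempty Θ] (hμ₀ : ∀ ℓ, IsPosProbVec (μ₀ ℓ)) :
    ∀ i ω ℓ, IsPosProbVec (socialLearning a θ₀ μ₀ lik i ω ℓ)
  | 0, _, ℓ => hμ₀ ℓ
  | _ + 1, _, _ => IsPosProbVec.logLinearPool _ _

lemma isPosProbVec_intermediateBelief [Nonempty Θ] (hμ₀ : ∀ ℓ, IsPosProbVec (μ₀ ℓ))
    (hlik : ∀ i ω ℓ θ, 0 < lik i ω ℓ θ) (i : ℕ) (ω : Ω) (ℓ : ι) :
    IsPosProbVec (intermediateBelief a θ₀ μ₀ lik i ω ℓ) :=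
  (isPosProbVec_socialLearning hμ₀ i ω ℓ).bayesUpdate (hlik _ ω ℓ)

lemma measurable_socialLearning (i : ℕ) :
    Measurable[pastSignals lik i] (socialLearning a θ₀ μ₀ lik i) := by
  induction i with
  | zero => exact measurable_const
  | succ i ih =>
    have hμ : Measurable[pastSignals lik (i + 1)] (socialLearning a θ₀ μ₀ lik i) :=
      ih.mono (biSup_mono fun j hj => hj.trans (Nat.lt_succ_self i)) le_rfl
    have hnew : Measurable[pastSignals lik (i + 1)] (lik (i + 1)) :=
      Measurable.of_comap_le (le_iSup₂ (f := fun j (_ : j < i + 1) =>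
        MeasurableSpace.comap (lik (j + 1)) inferInstance) i (Nat.lt_succ_self i))
    have := (measurable_socialLearningStep a θ₀).comp (hμ.prodMk hnew)
    exact this

variable [MeasurableSpace Ω] {P : Measure Ω}

lemma pastSignals_le {β : Type*} [MeasurableSpace β] {X : ℕ → Ω → β}
    (hX : ∀ i, Measurable (X i)) (i : ℕ) : pastSignals X i ≤ ‹MeasurableSpace Ω› :=
  iSup₂_le fun j _ => (hX (j + 1)).comap_le

lemma indep_pastSignals {β : Type*} [MeasurableSpace β] {X : ℕ → Ω → β}
    (hX : ∀ i, Measurable (X i)) (h : iIndepFun (fun i => X (i + 1)) P) (i : ℕ) :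
    Indep (pastSignals X i) (MeasurableSpace.comap (X (i + 1)) inferInstance) P := by
  have := indep_iSup_of_disjoint (fun j => (hX (j + 1)).comap_le)
    ((iIndepFun_iff_iIndep _ _ _).1 h) (S := Set.Iio i) (T := {i})
    (Set.disjoint_singleton_right.2 (lt_irrefl i))
  simpa only [iSup_singleton, Set.mem_Iio] using this

lemma measurable_intermediateBelief (hlik : ∀ i, Measurable (lik i)) (i : ℕ) :
    Measurable (intermediateBelief a θ₀ μ₀ lik i) := by
  have := (measurable_socialLearning (a := a) (θ₀ := θ₀) (μ₀ := μ₀) i).mono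
    (pastSignals_le hlik i) le_rfl
  have := hlik (i + 1)
  unfold intermediateBelief bayesUpdate
  fun_prop

/-- The likelihood ratios of the fresh signal have mean one and are independent of the current
beliefs. -/
lemma lintegral_inv_intermediateBelief [Nonempty Θ] (hlik : IsSignalLikelihood P θ₀ lik)
    (hμ₀ : ∀ ℓ, IsPosProbVec (μ₀ ℓ)) (i : ℕ) (ℓ : ι) :
    ∫⁻ ω, ENNReal.ofReal (intermediateBelief a θ₀ μ₀ lik i ω ℓ θ₀)⁻¹ ∂P =
      ∫⁻ ω, ENNReal.ofReal (socialLearning a θ₀ μ₀ lik i ω ℓ θ₀)⁻¹ ∂P := by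
  simp only [intermediateBelief]
  set μ := socialLearning a θ₀ μ₀ lik i
  have hμ : ∀ ω, IsPosProbVec (μ ω ℓ) := fun ω => isPosProbVec_socialLearning hμ₀ i ω ℓ
  have hpast := pastSignals_le hlik.measurable i
  have hg : ∀ θ, Measurable fun x : ι → Θ → ℝ => ENNReal.ofReal (x ℓ θ / x ℓ θ₀) :=
    fun θ => by fun_prop
  have hF : ∀ θ, Measurable[pastSignals lik i] fun ω => ENNReal.ofReal (μ ω ℓ θ / μ ω ℓ θ₀) :=
    fun θ => (hg θ).comp (measurable_socialLearning i)
  have hG : ∀ θ, Measurable[MeasurableSpace.comap (lik (i + 1)) inferInstance]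
      fun ω => ENNReal.ofReal (lik (i + 1) ω ℓ θ / lik (i + 1) ω ℓ θ₀) :=
    fun θ => (hg θ).comp (comap_measurable _)
  have hratio : ∀ ω θ, 0 ≤ μ ω ℓ θ / μ ω ℓ θ₀ :=
    fun ω θ => (div_pos ((hμ ω).pos θ) ((hμ ω).pos θ₀)).le
  have hlratio : ∀ ω θ, 0 ≤ lik (i + 1) ω ℓ θ / lik (i + 1) ω ℓ θ₀ :=
    fun ω θ => (div_pos (hlik.pos _ ω ℓ θ) (hlik.pos _ ω ℓ θ₀)).le
  calc ∫⁻ ω, ENNReal.ofReal (bayesUpdate (μ ω ℓ) (lik (i + 1) ω ℓ) θ₀)⁻¹ ∂P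
      = ∫⁻ ω, ∑ θ, ENNReal.ofReal (μ ω ℓ θ / μ ω ℓ θ₀) *
          ENNReal.ofReal (lik (i + 1) ω ℓ θ / lik (i + 1) ω ℓ θ₀) ∂P := by
        simp_rw [inv_bayesUpdate, ENNReal.ofReal_sum_of_nonneg fun θ _ =>
          mul_nonneg (hratio _ θ) (hlratio _ θ), ENNReal.ofReal_mul (hratio _ _)]
    _ = ∑ θ, ∫⁻ ω, ENNReal.ofReal (μ ω ℓ θ / μ ω ℓ θ₀) ∂P := by
        rw [lintegral_finsetSum' _ fun θ _ => (((hF θ).mono hpast le_rfl).fun_mul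
          ((hG θ).mono (hlik.measurable _).comap_le le_rfl)).aemeasurable]
        refine Finset.sum_congr rfl fun θ _ => ?_
        rw [lintegral_mul_eq_lintegral_mul_lintegral_of_independent_measurableSpace hpast
          (hlik.measurable (i + 1)).comap_le (indep_pastSignals hlik.measurable hlik.indep i)
          (hF θ) (hG θ), hlik.lintegral_ratio, mul_one]
    _ = ∫⁻ ω, ENNReal.ofReal (μ ω ℓ θ₀)⁻¹ ∂P := by
        rw [← lintegral_finsetSum' _ fun θ _ => ((hF θ).mono hpast le_rfl).aemeasurable]
        simp_rw [(hμ _).inv_eq_sum_div θ₀, ENNReal.ofReal_sum_of_nonneg fun θ _ => hratio _ θ]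

lemma lintegral_inv_socialLearning_le [IsProbabilityMeasure P] [Nontrivial Θ]
    (hlik : IsSignalLikelihood P θ₀ lik) (hμ₀ : ∀ ℓ, IsPosProbVec (μ₀ ℓ))
    (ha₀ : ∀ ℓ k, 0 ≤ a ℓ k) (ha₁ : ∀ k, ∑ ℓ, a ℓ k = 1) {C : ℝ} (hC : ∀ ℓ, (μ₀ ℓ θ₀)⁻¹ ≤ C)
    (i : ℕ) (k : ι) :
    ∫⁻ ω, ENNReal.ofReal (socialLearning a θ₀ μ₀ lik i ω k θ₀)⁻¹ ∂P ≤ ENNReal.ofReal C := by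
  induction i generalizing k with
  | zero => simpa [socialLearning] using ENNReal.ofReal_le_ofReal (hC k)
  | succ i ih =>
    set ψ := intermediateBelief a θ₀ μ₀ lik i
    have hψ : ∀ ω ℓ, 0 ≤ (ψ ω ℓ θ₀)⁻¹ := fun ω ℓ =>
      inv_nonneg.2 ((isPosProbVec_intermediateBelief hμ₀ hlik.pos i ω ℓ).pos θ₀).le
    have hmeas : ∀ ℓ, Measurable fun ω => ENNReal.ofReal (ψ ω ℓ θ₀)⁻¹ := fun ℓ => by
      have := measurable_intermediateBelief (a := a) (θ₀ := θ₀) (μ₀ := μ₀) hlik.measurable i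
      fun_prop
    calc ∫⁻ ω, ENNReal.ofReal (socialLearning a θ₀ μ₀ lik (i + 1) ω k θ₀)⁻¹ ∂P
        ≤ ∫⁻ ω, ∑ ℓ, ENNReal.ofReal (a ℓ k) * ENNReal.ofReal (ψ ω ℓ θ₀)⁻¹ ∂P := by
          refine lintegral_mono fun ω => ?_
          simp_rw [← ENNReal.ofReal_mul (ha₀ _ k)]
          rw [← ENNReal.ofReal_sum_of_nonneg fun ℓ _ => mul_nonneg (ha₀ ℓ k) (hψ ω ℓ)]
          exact ENNReal.ofReal_le_ofReal (inv_socialLearningStep_le (ha₀ · k) (ha₁ k)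
            (isPosProbVec_socialLearning hμ₀ i ω) (hlik.pos _ ω))
      _ = ∑ ℓ, ENNReal.ofReal (a ℓ k) *
            ∫⁻ ω, ENNReal.ofReal (socialLearning a θ₀ μ₀ lik i ω ℓ θ₀)⁻¹ ∂P := by
          rw [lintegral_finsetSum _ fun ℓ _ => (hmeas ℓ).const_mul _]
          simp_rw [lintegral_const_mul _ (hmeas _), ψ, lintegral_inv_intermediateBelief hlik hμ₀]
      _ ≤ ∑ ℓ, ENNReal.ofReal (a ℓ k) * ENNReal.ofReal C := by gcongr with ℓ; exact ih ℓ
      _ = ENNReal.ofReal C := by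
          rw [← Finset.sum_mul, ← ENNReal.ofReal_sum_of_nonneg fun ℓ _ => ha₀ ℓ k, ha₁,
            ENNReal.ofReal_one, one_mul]

lemma tendsto_measure_one_sub_intermediateBelief [Nonempty Θ]
    (hlik : IsSignalLikelihood P θ₀ lik) (hμ₀ : ∀ ℓ, IsPosProbVec (μ₀ ℓ)) {j : ι}
    (hj : TendstoInMeasure P (fun i ω => socialLearning a θ₀ μ₀ lik i ω j θ₀) atTop (fun _ => 1))
    {δ : ℝ} (hδ : 0 < δ) :
    Tendsto (fun i => P {ω | δ ≤ 1 - intermediateBelief a θ₀ μ₀ lik i ω j θ₀}) atTop (𝓝 0) := by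
  have hμ := isPosProbVec_socialLearning (a := a) (θ₀ := θ₀) (lik := lik) hμ₀
  refine tendsto_measure_zero_of_forall_subset_union fun η hη => ?_
  obtain ⟨T, hT, hTη⟩ := exists_forall_measure_exists_le_le
    (f := fun θ i ω => lik (i + 1) ω j θ / lik (i + 1) ω j θ₀)
    (fun θ i => by have := hlik.measurable (i + 1); fun_prop) (C := 1)
    (fun θ i => (hlik.lintegral_ratio i j θ).trans_le ENNReal.ofReal_one.ge) hη
  set ε := min (1 / 2) (δ / (2 * T))
  refine ⟨_, fun i => {ω | ε ≤ 1 - socialLearning a θ₀ μ₀ lik i ω j θ₀}, hTη,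
    (tendstoInMeasure_one_iff fun i ω => (hμ i ω j).le_one θ₀).1 hj ε (by positivity),
    fun i ω hω => ?_⟩
  by_contra h
  simp only [Set.mem_union, Set.mem_ofPred_eq, not_or, not_exists, not_le,
    intermediateBelief] at h hω
  obtain ⟨hlr, hμε⟩ := h
  set m := socialLearning a θ₀ μ₀ lik i ω j θ₀
  have hm : 1 / 2 ≤ m := by linarith [min_le_left (1 / 2) (δ / (2 * T))]
  have hεδ : T * (2 * ε) ≤ δ := by
    have := min_le_right (1 / 2) (δ / (2 * T))
    rw [le_div_iff₀ (by positivity)] at this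
    linarith
  have hratio : (1 - m) / m ≤ 2 * (1 - m) := by
    rw [div_le_iff₀ (by linarith)]
    nlinarith [(hμ i ω j).le_one θ₀]
  have := one_sub_bayesUpdate_le (hμ i ω j) (hlik.pos _ ω j) fun θ => (hlr θ).le
  nlinarith

lemma tendstoInMeasure_socialLearning_of_pos [IsProbabilityMeasure P] [Nontrivial Θ]
    (hlik : IsSignalLikelihood P θ₀ lik) (hμ₀ : ∀ ℓ, IsPosProbVec (μ₀ ℓ))
    (ha₀ : ∀ ℓ k, 0 ≤ a ℓ k) (ha₁ : ∀ k, ∑ ℓ, a ℓ k = 1) {j k : ι} (hjk : 0 < a j k)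
    (hj : TendstoInMeasure P (fun i ω => socialLearning a θ₀ μ₀ lik i ω j θ₀) atTop (fun _ => 1)) :
    TendstoInMeasure P (fun i ω => socialLearning a θ₀ μ₀ lik i ω k θ₀) atTop (fun _ => 1) := by
  rcases eq_or_ne j k with rfl | hne
  · exact hj
  have hμ := isPosProbVec_socialLearning (a := a) (θ₀ := θ₀) (lik := lik) hμ₀
  rw [tendstoInMeasure_one_iff fun i ω => (hμ i ω k).le_one θ₀]
  intro ε hε
  rw [← tendsto_add_atTop_iff_nat 1]
  refine tendsto_measure_zero_of_forall_subset_union fun η hη => ?_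
  obtain ⟨T, hT, hTη⟩ := exists_forall_measure_exists_le_le
    (f := fun ℓ i ω => (intermediateBelief a θ₀ μ₀ lik i ω ℓ θ₀)⁻¹)
    (fun ℓ i => by
      have := measurable_intermediateBelief (a := a) (θ₀ := θ₀) (μ₀ := μ₀) hlik.measurable i
      fun_prop)
    (fun ℓ i => (lintegral_inv_intermediateBelief hlik hμ₀ i ℓ).trans_le
      (lintegral_inv_socialLearning_le hlik hμ₀ ha₀ ha₁ (fun ℓ => Finset.single_le_sum
        (fun ℓ _ => inv_nonneg.2 ((hμ₀ ℓ).pos θ₀).le) (Finset.mem_univ ℓ)) i ℓ)) hη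
  set c : ℝ := (Fintype.card Θ : ℝ)
  have hc : 0 < c := Nat.cast_pos.2 Fintype.card_pos
  set δ := (ε / (2 * c * T)) ^ (a j k)⁻¹ / T
  refine ⟨_, _, hTη, tendsto_measure_one_sub_intermediateBelief hlik hμ₀ hj (δ := δ)
    (by positivity), fun i ω hω => ?_⟩
  by_contra h
  simp only [Set.mem_union, Set.mem_ofPred_eq, not_or, not_exists, not_le] at h hω
  obtain ⟨hψT, hψδ⟩ := h
  have hδT : (δ * T) ^ a j k = ε / (2 * c * T) := by
    rw [div_mul_cancel₀ _ hT.ne', ← Real.rpow_mul (by positivity), inv_mul_cancel₀ hjk.ne',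
      Real.rpow_one]
  have := one_sub_socialLearningStep_le (ha₀ · k) (ha₁ k) (hμ i ω) (hlik.pos _ ω) hne
    (fun ℓ => (hψT ℓ).le) hψδ.le
  rw [hδT] at this
  have hbound : (c - 1) * (T * (ε / (2 * c * T))) < ε := by
    rw [show T * (ε / (2 * c * T)) = ε / (2 * c) by field_simp, mul_div_assoc',
      div_lt_iff₀ (by positivity)]
    nlinarith
  exact absurd hω (not_le.2 (this.trans_lt hbound))

theorem tendstoInMeasure_socialLearning [IsProbabilityMeasure P] [Nontrivial Θ]
    (hlik : IsSignalLikelihood P θ₀ lik) (hμ₀ : ∀ ℓ, IsPosProbVec (μ₀ ℓ))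
    (ha₀ : ∀ ℓ k, 0 ≤ a ℓ k) (ha₁ : ∀ k, ∑ ℓ, a ℓ k = 1)
    (ha : ∃ n : ℕ, ∀ ℓ k, 0 < (Matrix.of a ^ n) ℓ k) {h : ι}
    (hh : TendstoInMeasure P (fun i ω => socialLearning a θ₀ μ₀ lik i ω h θ₀) atTop (fun _ => 1))
    (k : ι) :
    TendstoInMeasure P (fun i ω => socialLearning a θ₀ μ₀ lik i ω k θ₀) atTop (fun _ => 1) := by
  obtain ⟨n, hn⟩ := ha
  exact Matrix.induction_of_pow_apply_pos ha₀
    (fun j k hjk hj => tendstoInMeasure_socialLearning_of_pos hlik hμ₀ ha₀ ha₁ hjk hj) (hn h k) hh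

end Dynamics

theorem influence_of_a_learning_agent_general
    {Ω : Type} [mΩ : MeasurableSpace Ω] (P : Measure Ω) [IsProbabilityMeasure P]
    (K H : ℕ) (hH : 2 ≤ H)
    (X : Fin K → Type) [∀ k, MeasurableSpace (X k)]
    (ν : ∀ k, Measure (X k))
    (L : ∀ k : Fin K, Fin H → X k → ℝ)
    (θ0 : Fin H)
    (hLpos : ∀ k θ x, 0 < L k θ x)
    (hLmeas : ∀ k θ, Measurable (L k θ))
    (hLdens : ∀ k θ, ∫ x, L k θ x ∂(ν k) = 1)
    (ξ : ∀ k : Fin K, ℕ → Ω → X k)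
    (hξmeas : ∀ k i, Measurable (ξ k i))
    (hξdist : ∀ k (i : ℕ), 1 ≤ i →
      Measure.map (ξ k i) P = (ν k).withDensity (fun x => ENNReal.ofReal (L k θ0 x)))
    (hξindep : iIndepFun
      (fun (i : ℕ) (ω : Ω) (k : Fin K) => ξ k (i + 1) ω) P)
    (a : Fin K → Fin K → ℝ)
    (ha_nonneg : ∀ ℓ k, 0 ≤ a ℓ k)
    (ha_stoch : ∀ k, ∑ ℓ, a ℓ k = 1)
    (ha_prim : ∃ n : ℕ, ∀ ℓ k, 0 < ((Matrix.of a) ^ n) ℓ k)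
    (θTX : Fin H)
    (hθTX : θTX = θ0)
    (μb ψ ψh : Fin K → ℕ → Fin H → Ω → ℝ)
    (μinit : Fin K → Fin H → ℝ)
    (hμinit_pos : ∀ k θ, 0 < μinit k θ)
    (hμinit_sum : ∀ k, ∑ θ, μinit k θ = 1)
    (hμb0 : ∀ k θ ω, μb k 0 θ ω = μinit k θ)
    (hψ : ∀ k (i : ℕ) θ ω, ψ k (i + 1) θ ω =
      μb k i θ ω * L k θ (ξ k (i + 1) ω) /
        ∑ θ', μb k i θ' ω * L k θ' (ξ k (i + 1) ω))
    (hψh_tx : ∀ k (i : ℕ) ω, ψh k (i + 1) θTX ω = ψ k (i + 1) θTX ω)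
    (hψh_ntx : ∀ k (i : ℕ) θ ω, θ ≠ θTX →
      ψh k (i + 1) θ ω = (1 - ψ k (i + 1) θTX ω) / ((H : ℝ) - 1))
    (hcomb : ∀ k (i : ℕ) θ ω, μb k (i + 1) θ ω =
      Real.exp (a k k * Real.log (ψ k (i + 1) θ ω) +
          ∑ ℓ ∈ Finset.univ.erase k, a ℓ k * Real.log (ψh ℓ (i + 1) θ ω)) /
        ∑ θ', Real.exp (a k k * Real.log (ψ k (i + 1) θ' ω) +
          ∑ ℓ ∈ Finset.univ.erase k, a ℓ k * Real.log (ψh ℓ (i + 1) θ' ω)))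
    (h : Fin K)
    (hh : TendstoInMeasure P (fun (i : ℕ) ω => μb h i θTX ω) atTop (fun _ => (1 : ℝ))) :
    ∀ k : Fin K, k ≠ h →
      TendstoInMeasure P (fun (i : ℕ) ω => μb k i θTX ω) atTop (fun _ => (1 : ℝ)) := by
  subst hθTX
  have : Nontrivial (Fin H) := Fin.nontrivial_iff_two_le.2 hH
  set lik : ℕ → Ω → Fin K → Fin H → ℝ := fun i ω ℓ θ => L ℓ θ (ξ ℓ i ω)
  have hlik : IsSignalLikelihood P θTX lik :=
    .of_density hLpos hLmeas hLdens hξmeas hξdist hξindep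
  have hψh' : ∀ ℓ i θ ω, ψh ℓ (i + 1) θ ω = partialShare θTX (fun θ => ψ ℓ (i + 1) θ ω) θ := by
    intro ℓ i θ ω
    rcases eq_or_ne θ θTX with rfl | hθ
    · rw [hψh_tx, partialShare_self]
    · rw [hψh_ntx ℓ i θ ω hθ, partialShare_of_ne hθ, Fintype.card_fin]
  have hμb : ∀ i ω, (fun ℓ θ => μb ℓ i θ ω) = socialLearning a θTX μinit lik i ω := by
    intro i ω
    induction i with
    | zero => funext ℓ θ; exact hμb0 ℓ θ ω
    | succ i ih =>
      funext ℓ θ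
      simp only [socialLearning, socialLearningStep, logLinearPool, sum_mul_log_receivedBeliefs,
        ← ih, hcomb, hψh', hψ, bayesUpdate]
      rfl
  intro k _
  have hconv : ∀ k, (fun i ω => μb k i θTX ω) =
      fun i ω => socialLearning a θTX μinit lik i ω k θTX :=
    fun k => funext₂ fun i ω => congrFun₂ (hμb i ω) k θTX
  rw [hconv] at hh ⊢
  exact tendstoInMeasure_socialLearning hlik (fun ℓ => ⟨hμinit_pos ℓ, hμinit_sum ℓ⟩) ha_nonneg
    ha_stoch ha_prim hh k

theorem influence_of_a_learning_agent
    {Ω : Type} [mΩ : MeasurableSpace Ω] (P : Measure Ω) [IsProbabilityMeasure P]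
    (K H : ℕ) (hK : 0 < K) (hH : 2 ≤ H)
    (X : Fin K → Type) [∀ k, MeasurableSpace (X k)]
    (ν : ∀ k, Measure (X k))
    (L : ∀ k : Fin K, Fin H → X k → ℝ)
    (θ0 : Fin H)
    (hLpos : ∀ k θ x, 0 < L k θ x)
    (hLmeas : ∀ k θ, Measurable (L k θ))
    (hLdens : ∀ k θ, ∫ x, L k θ x ∂(ν k) = 1)
    (ξ : ∀ k : Fin K, ℕ → Ω → X k)
    (hξmeas : ∀ k i, Measurable (ξ k i))
    (hξdist : ∀ k (i : ℕ), 1 ≤ i →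
      Measure.map (ξ k i) P = (ν k).withDensity (fun x => ENNReal.ofReal (L k θ0 x)))
    (hξindep : iIndepFun
      (fun (i : ℕ) (ω : Ω) (k : Fin K) => ξ k (i + 1) ω) P)
    (hKL : ∀ k θ θ',
      Integrable (fun x => L k θ x * Real.log (L k θ x / L k θ' x)) (ν k))
    (a : Fin K → Fin K → ℝ)
    (ha_nonneg : ∀ ℓ k, 0 ≤ a ℓ k)
    (ha_stoch : ∀ k, ∑ ℓ, a ℓ k = 1)
    (ha_prim : ∃ n : ℕ, ∀ ℓ k, 0 < ((Matrix.of a) ^ n) ℓ k)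
    (v : Fin K → ℝ)
    (hv_pos : ∀ ℓ, 0 < v ℓ)
    (hv_sum : ∑ ℓ, v ℓ = 1)
    (hv_eig : ∀ ℓ, ∑ k, a ℓ k * v k = v ℓ)
    (ha_self : ∀ k, 0 < a k k)
    (θTX : Fin H)
    (hθTX : θTX = θ0)
    (μb ψ ψh : Fin K → ℕ → Fin H → Ω → ℝ)
    (μinit : Fin K → Fin H → ℝ)
    (hμinit_pos : ∀ k θ, 0 < μinit k θ)
    (hμinit_sum : ∀ k, ∑ θ, μinit k θ = 1)
    (hμb0 : ∀ k θ ω, μb k 0 θ ω = μinit k θ)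
    (hψ : ∀ k (i : ℕ) θ ω, ψ k (i + 1) θ ω =
      μb k i θ ω * L k θ (ξ k (i + 1) ω) /
        ∑ θ', μb k i θ' ω * L k θ' (ξ k (i + 1) ω))
    (hψh_tx : ∀ k (i : ℕ) ω, ψh k (i + 1) θTX ω = ψ k (i + 1) θTX ω)
    (hψh_ntx : ∀ k (i : ℕ) θ ω, θ ≠ θTX →
      ψh k (i + 1) θ ω = (1 - ψ k (i + 1) θTX ω) / ((H : ℝ) - 1))
    (hcomb : ∀ k (i : ℕ) θ ω, μb k (i + 1) θ ω =
      Real.exp (a k k * Real.log (ψ k (i + 1) θ ω) +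
          ∑ ℓ ∈ Finset.univ.erase k, a ℓ k * Real.log (ψh ℓ (i + 1) θ ω)) /
        ∑ θ', Real.exp (a k k * Real.log (ψ k (i + 1) θ' ω) +
          ∑ ℓ ∈ Finset.univ.erase k, a ℓ k * Real.log (ψh ℓ (i + 1) θ' ω)))
    (hclear : ∃ (kstar : Fin K) (c : ℝ), 0 < c ∧
      (∃ θ : Fin H, 0 < (∫ ω, Real.log (L kstar θ0 (ξ kstar 1 ω) / L kstar θ (ξ kstar 1 ω)) ∂P)) ∧
      ∀ α : Fin H → ℝ, (∀ τ, 0 ≤ α τ) → (∑ τ, α τ = 1) →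
        (∀ τ, α τ ≠ 0 → 0 < (∫ ω, Real.log (L kstar θ0 (ξ kstar 1 ω) / L kstar τ (ξ kstar 1 ω)) ∂P)) →
        c ≤ ∫ x, |L kstar θ0 x - ∑ τ, α τ * L kstar τ x| ∂(ν kstar))
    (h : Fin K)
    (hh : TendstoInMeasure P (fun (i : ℕ) ω => μb h i θTX ω) atTop (fun _ => (1 : ℝ))) :
    ∀ k : Fin K, k ≠ h →
      TendstoInMeasure P (fun (i : ℕ) ω => μb k i θTX ω) atTop (fun _ => (1 : ℝ)) :=
  influence_of_a_learning_agent_general (mΩ := mΩ) P K H hH X ν L θ0 hLpos hLmeas hLdens ξ hξmeas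
    hξdist hξindep a ha_nonneg ha_stoch ha_prim θTX hθTX μb ψ ψh μinit hμinit_pos hμinit_sum hμb0 hψ
    hψh_tx hψh_ntx hcomb h hh
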